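/- The cost function c that maps a temporal walk W to its arrival time t (the time label of its last transition) if W is a temporal path, and to ∞ otherwise — whose c-optimal walks are exactly the foremost temporal paths — is prefix-optimal. -/

import Mathlib

open scoped Classical

/-- A time arc `(u, v, t)`: a transition from vertex `u` to vertex `v` at time step `t`. -/
abbrev TArc (V : Type*) := V × V × ℕ

/-- A directed temporal graph `𝒢 = (V, ℰ, T)`: the time arcs connect distinct vertices
and carry time labels in `[T] = {1, …, T}`. -/
structure TemporalGraph (V : Type*) where
  lifetime : ℕ
  arcs : Set (TArc V)
  arcs_valid : ∀ e ∈ arcs, e.1 ≠ e.2.1 ∧ 1 ≤ e.2.2 ∧ e.2.2 ≤ lifetime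

namespace TemporalGraph

variable {V : Type*}

/-- `L` is a temporal walk of `G`: a nonempty sequence of time arcs of `G` in which the
endpoint of each arc is the starting point of the next one, with non-decreasing labels. -/
def IsTWalk (G : TemporalGraph V) (L : List (TArc V)) : Prop :=
  L ≠ [] ∧ (∀ e ∈ L, e ∈ G.arcs) ∧ L.Chain' fun e f => e.2.1 = f.1 ∧ e.2.2 ≤ f.2.2

/-- The walk `L` starts at vertex `s`. -/
def StartsAt (s : V) (L : List (TArc V)) : Prop := ∃ e ∈ L.head?, e.1 = s

/-- The walk `L` ends at vertex `z`. -/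
def EndsAt (z : V) (L : List (TArc V)) : Prop := ∃ e ∈ L.getLast?, e.2.1 = z

/-- The walk `L` ends at the vertex appearance `(v, t)`. -/
def EndsAtApp (v : V) (t : ℕ) (L : List (TArc V)) : Prop :=
  ∃ e ∈ L.getLast?, e.2.1 = v ∧ e.2.2 = t

/-- `L` is an `s`-`z`-walk of `G`. -/
def IsWalkFromTo (G : TemporalGraph V) (s z : V) (L : List (TArc V)) : Prop :=
  G.IsTWalk L ∧ StartsAt s L ∧ EndsAt z L

/-- `L` is an `s`-`(v,t)`-walk of `G`. -/
def IsWalkFromToApp (G : TemporalGraph V) (s v : V) (t : ℕ) (L : List (TArc V)) : Prop :=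
  G.IsTWalk L ∧ StartsAt s L ∧ EndsAtApp v t L

/-- The list of vertices visited by a walk (its starting point followed by the
endpoints of all its transitions). -/
def walkVerts (L : List (TArc V)) : List V :=
  (L.head?.map Prod.fst).toList ++ L.map fun e => e.2.1

/-- A temporal path is a temporal walk that visits each vertex at most once. -/
def IsTPath (G : TemporalGraph V) (L : List (TArc V)) : Prop :=
  G.IsTWalk L ∧ (walkVerts L).Nodup

/-- The walk `L` goes through vertex `v`. -/
def VisitsVertex (v : V) (L : List (TArc V)) : Prop := v ∈ walkVerts L

/-- The walk `L` contains a transition into the vertex appearance `(v, t)`. -/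
def ContainsApp (v : V) (t : ℕ) (L : List (TArc V)) : Prop :=
  ∃ e ∈ L, e.2.1 = v ∧ e.2.2 = t

/-- The walk `L`, regarded as a walk starting at source `s`, goes through the vertex
appearance `(v, t)`; by convention the source is visited at the appearance `(s, 0)` only. -/
def VisitsApp (s v : V) (t : ℕ) (L : List (TArc V)) : Prop :=
  (v = s ∧ t = 0) ∨ (v ≠ s ∧ ContainsApp v t L)

/-- A cost function maps temporal walks (arc sequences) to `ℝ ∪ {∞}`. -/
abbrev CostFn (V : Type*) := List (TArc V) → WithTop ℝ

/-- `c*_s(v, t)`: the minimum value of `c` over all `s`-`(v,t)`-walks; it is `∞` if the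
minimum is not defined (not attained) or if there is no such walk. -/
noncomputable def cStar (G : TemporalGraph V) (c : CostFn V) (s v : V) (t : ℕ) : WithTop ℝ :=
  if h : ∃ L, G.IsWalkFromToApp s v t L ∧ ∀ L', G.IsWalkFromToApp s v t L' → c L ≤ c L' then
    c h.choose
  else ⊤

/-- `c*_s(v) = min_{t ∈ [T]} c*_s(v, t)`. -/
noncomputable def cStarV (G : TemporalGraph V) (c : CostFn V) (s v : V) : WithTop ℝ :=
  (Finset.Icc 1 G.lifetime).inf fun t => G.cStar c s v t

/-- `L` is a `c`-optimal `s`-`(v,t)`-walk: `c L = c*_s(v, t) < ∞`. -/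
def IsOptWalkToApp (G : TemporalGraph V) (c : CostFn V) (s v : V) (t : ℕ)
    (L : List (TArc V)) : Prop :=
  G.IsWalkFromToApp s v t L ∧ c L = G.cStar c s v t ∧ c L ≠ ⊤

/-- `L` is a `c`-optimal `s`-`v`-walk: `c L = c*_s(v) < ∞`. -/
def IsOptWalkTo (G : TemporalGraph V) (c : CostFn V) (s v : V) (L : List (TArc V)) : Prop :=
  G.IsWalkFromTo s v L ∧ c L = G.cStarV c s v ∧ c L ≠ ⊤

/-- The induced set `𝒲^(c)` of optimal temporal walks of `c`. -/
def OptWalks (G : TemporalGraph V) (c : CostFn V) : Set (List (TArc V)) :=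
  {L | ∃ s z, G.IsOptWalkTo c s z L}

/-- `c` is prefix-optimal: every prefix of an optimal temporal walk from `s`, ending at a
vertex appearance `(v, t)` of the walk, has cost `c*_s(v, t)`. -/
def PrefixOptimal (G : TemporalGraph V) (c : CostFn V) : Prop :=
  ∀ L ∈ G.OptWalks c, ∀ s, StartsAt s L →
    ∀ (i : ℕ) (e : TArc V), L[i]? = some e →
      c (L.take (i + 1)) = G.cStar c s e.2.1 e.2.2

/-- `c` is prefix-exchangeable: if an optimal temporal walk from `s` goes through a vertex
appearance `(v, t)`, then replacing its prefix up to `(v, t)` by any `s`-`(v,t)`-walk of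
cost `c*_s(v, t)` again yields an optimal temporal walk. -/
def PrefixExchangeable (G : TemporalGraph V) (c : CostFn V) : Prop :=
  ∀ L ∈ G.OptWalks c, ∀ s, StartsAt s L →
    ∀ (i : ℕ) (e : TArc V), L[i]? = some e →
      ∀ L', G.IsWalkFromToApp s e.2.1 e.2.2 L' → c L' = G.cStar c s e.2.1 e.2.2 →
        L' ++ L.drop (i + 1) ∈ G.OptWalks c

/-- `c` is prefix-compatible if it is both prefix-optimal and prefix-exchangeable. -/
def PrefixCompatible (G : TemporalGraph V) (c : CostFn V) : Prop :=
  G.PrefixOptimal c ∧ G.PrefixExchangeable c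

/-- `c` is finite if `𝒲^(c)` has finite cardinality. -/
def FiniteCost (G : TemporalGraph V) (c : CostFn V) : Prop := (G.OptWalks c).Finite

/-- The direct predecessor relation of source `s` with respect to the walk set `Wset`:
`IsDirPred Wset s p q` holds iff `p ∈ Pre_s(q)`, i.e. iff some walk in `Wset` starting
at `s` visits the vertex appearance `p` directly before the vertex appearance `q`, or
`p = (s, 0)` and some walk in `Wset` starting at `s` begins with a transition into `q`.
This relation is exactly the arc relation of the predecessor graph `G̃_s`. -/
def IsDirPred (Wset : Set (List (TArc V))) (s : V) (p q : V × ℕ) : Prop :=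
  ∃ L ∈ Wset, StartsAt s L ∧
    ((∃ (i : ℕ) (e f : TArc V), L[i]? = some e ∧ L[i + 1]? = some f ∧ e.2 = p ∧ f.2 = q) ∨
      (p = (s, 0) ∧ ∃ f ∈ L.head?, f.2 = q))

/-- A directed path from `p` to `q` in the static digraph given by the arc relation `R`. -/
def IsRelPath {α : Type*} (R : α → α → Prop) (p q : α) (P : List α) : Prop :=
  P.Chain' R ∧ P.head? = some p ∧ P.getLast? = some q ∧ P.Nodup

/-- `σ_{sz}`: the number of `s`-`z`-walks in `𝒲`. -/
noncomputable def sigma (G : TemporalGraph V) (𝒲 : Set (List (TArc V))) (s z : V) : ℕ :=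
  {L ∈ 𝒲 | G.IsWalkFromTo s z L}.ncard

/-- `σ_{sz}(v)`: the number of `s`-`z`-walks in `𝒲` that go through the vertex `v`. -/
noncomputable def sigmaV (G : TemporalGraph V) (𝒲 : Set (List (TArc V))) (s z v : V) : ℕ :=
  {L ∈ 𝒲 | G.IsWalkFromTo s z L ∧ VisitsVertex v L}.ncard

/-- `σ_{sz}(v, t)`: the number of `s`-`z`-walks in `𝒲` that go through the vertex
appearance `(v, t)`. -/
noncomputable def sigmaApp (G : TemporalGraph V) (𝒲 : Set (List (TArc V))) (s z v : V)
    (t : ℕ) : ℕ :=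
  {L ∈ 𝒲 | G.IsWalkFromTo s z L ∧ VisitsApp s v t L}.ncard

/-- `σ_{s(v,t)}`: the number of `c`-optimal `s`-`(v,t)`-walks. -/
noncomputable def sigmaOptApp (G : TemporalGraph V) (c : CostFn V) (s v : V) (t : ℕ) : ℕ :=
  {L | G.IsOptWalkToApp c s v t L}.ncard

/-- The pair dependency `δ_{𝒲,sz}(v)`. -/
noncomputable def pairDep (G : TemporalGraph V) (𝒲 : Set (List (TArc V))) (s z v : V) : ℝ :=
  if 0 < G.sigma 𝒲 s z then (G.sigmaV 𝒲 s z v : ℝ) / (G.sigma 𝒲 s z : ℝ) else 0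

/-- The temporal pair dependency `δ_{𝒲,sz}(v, t)`. -/
noncomputable def pairDepApp (G : TemporalGraph V) (𝒲 : Set (List (TArc V))) (s z v : V)
    (t : ℕ) : ℝ :=
  if 0 < G.sigma 𝒲 s z then (G.sigmaApp 𝒲 s z v t : ℝ) / (G.sigma 𝒲 s z : ℝ) else 0

/-- The cumulative dependency `δ_{𝒲,s}(v)`. -/
noncomputable def cumDep [Fintype V] (G : TemporalGraph V) (𝒲 : Set (List (TArc V)))
    (s v : V) : ℝ :=
  ∑ z : V, G.pairDep 𝒲 s z v

/-- The temporal cumulative dependency `δ_{𝒲,s}(v, t)`. -/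
noncomputable def cumDepApp [Fintype V] (G : TemporalGraph V) (𝒲 : Set (List (TArc V)))
    (s v : V) (t : ℕ) : ℝ :=
  ∑ z : V, G.pairDepApp 𝒲 s z v t

/-- The temporal betweenness centrality `B_𝒲(v) = Σ_{s ≠ v ≠ z} δ_{𝒲,sz}(v)`. -/
noncomputable def btw [Fintype V] (G : TemporalGraph V) (𝒲 : Set (List (TArc V)))
    (v : V) : ℝ :=
  ∑ s : V, ∑ z : V, if s ≠ v ∧ z ≠ v then G.pairDep 𝒲 s z v else 0

/-- The total temporal betweenness centrality `B*_𝒲(v) = Σ_{s, z ∈ V} δ_{𝒲,sz}(v)`. -/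
noncomputable def totBtw [Fintype V] (G : TemporalGraph V) (𝒲 : Set (List (TArc V)))
    (v : V) : ℝ :=
  ∑ s : V, ∑ z : V, G.pairDep 𝒲 s z v

/-- The edge dependency `δ_{𝒲,sz}(v, t, (v, w, t'))`: the fraction of `s`-`z`-walks in `𝒲`
that go through the vertex appearance `(v, t)` and use the time arc `(v, w, t')`. -/
noncomputable def edgeDep (G : TemporalGraph V) (𝒲 : Set (List (TArc V))) (s z v : V)
    (t : ℕ) (w : V) (t' : ℕ) : ℝ :=
  if 0 < G.sigma 𝒲 s z then
    ({L ∈ 𝒲 | G.IsWalkFromTo s z L ∧ VisitsApp s v t L ∧ (v, w, t') ∈ L}.ncard : ℝ) /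
      (G.sigma 𝒲 s z : ℝ)
  else 0

/-- The arrival time of a temporal walk: the time label of its last transition. -/
def arrival (L : List (TArc V)) : ℕ :=
  match L.getLast? with
  | some e => e.2.2
  | none => 0

/-- The cost function for foremost temporal paths: it maps a temporal walk `W` to its
arrival time if `W` is a temporal path, and to `∞` otherwise. -/
noncomputable def foremostPathCost (G : TemporalGraph V) : CostFn V := fun L =>
  if G.IsTPath L then ((arrival L : ℝ) : WithTop ℝ) else ⊤

/-!
Every `s`-`(v,t)`-walk costs at least `t`: it costs `∞` unless it is a temporal path, and then
its arrival time is `t`. A prefix of a temporal path is again a temporal path, so the prefix of a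
finite-cost walk ending at `(v, t)` attains this bound.
-/

section

variable {G : TemporalGraph V} {L : List (TArc V)}

theorem cStar_eq_of_forall_le {c : CostFn V} {s v : V} {t : ℕ} (hL : G.IsWalkFromToApp s v t L)
    (hmin : ∀ L', G.IsWalkFromToApp s v t L' → c L ≤ c L') : G.cStar c s v t = c L := by
  have hex : ∃ L, G.IsWalkFromToApp s v t L ∧ ∀ L', G.IsWalkFromToApp s v t L' → c L ≤ c L' :=
    ⟨L, hL, hmin⟩
  rw [cStar, dif_pos hex]
  exact le_antisymm (hex.choose_spec.2 L hL) (hmin _ hex.choose_spec.1)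

theorem arrival_eq_of_getLast? {e : TArc V} (h : L.getLast? = some e) : arrival L = e.2.2 := by
  simp [arrival, h]

theorem getLast?_take_succ {i : ℕ} {e : TArc V} (he : L[i]? = some e) :
    (L.take (i + 1)).getLast? = some e := by
  rw [List.getLast?_take, if_neg i.succ_ne_zero, Nat.add_sub_cancel, he, Option.some_or]

theorem IsTWalk.take (hL : G.IsTWalk L) {n : ℕ} (hn : n ≠ 0) : G.IsTWalk (L.take n) :=
  ⟨by simp [hn, hL.1], fun e he => hL.2.1 e (List.take_subset _ _ he), hL.2.2.take n⟩

theorem walkVerts_take_succ (L : List (TArc V)) (n : ℕ) :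
    walkVerts (L.take (n + 1)) = (walkVerts L).take (n + 2) := by
  cases L <;> simp [walkVerts, List.take_succ_cons, List.map_take]

theorem IsTPath.take (hL : G.IsTPath L) (n : ℕ) : G.IsTPath (L.take (n + 1)) :=
  ⟨hL.1.take n.succ_ne_zero, walkVerts_take_succ L n ▸ (List.take_sublist _ _).nodup hL.2⟩

theorem StartsAt.take {s : V} (hs : StartsAt s L) (n : ℕ) : StartsAt s (L.take (n + 1)) := by
  cases L <;> simp_all [StartsAt]

theorem isTPath_of_foremostPathCost_ne_top (h : G.foremostPathCost L ≠ ⊤) : G.IsTPath L := by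
  by_contra hp
  exact h (if_neg hp)

theorem foremostPathCost_of_isTPath (hL : G.IsTPath L) :
    G.foremostPathCost L = ((arrival L : ℝ) : WithTop ℝ) :=
  if_pos hL

theorem foremostPathCost_of_isTPath_of_endsAtApp {v : V} {t : ℕ} (hp : G.IsTPath L)
    (hL : EndsAtApp v t L) : G.foremostPathCost L = ((t : ℝ) : WithTop ℝ) := by
  obtain ⟨e, he, -, rfl⟩ := hL
  rw [foremostPathCost_of_isTPath hp, arrival_eq_of_getLast? he]

theorem le_foremostPathCost {s v : V} {t : ℕ} (hL : G.IsWalkFromToApp s v t L) :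
    ((t : ℝ) : WithTop ℝ) ≤ G.foremostPathCost L := by
  by_cases hp : G.IsTPath L
  · exact (foremostPathCost_of_isTPath_of_endsAtApp hp hL.2.2).ge
  · simp [foremostPathCost, hp]

theorem cStar_foremostPathCost {s v : V} {t : ℕ} (hL : G.IsWalkFromToApp s v t L)
    (hp : G.IsTPath L) : G.cStar G.foremostPathCost s v t = ((t : ℝ) : WithTop ℝ) := by
  have hcost := foremostPathCost_of_isTPath_of_endsAtApp hp hL.2.2
  rw [cStar_eq_of_forall_le hL fun L' hL' => hcost ▸ le_foremostPathCost hL', hcost]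

end

theorem foremostPathCost_prefixOptimal_general {V : Type*} (G : TemporalGraph V) :
    G.PrefixOptimal (G.foremostPathCost) := by
  rintro L ⟨-, -, -, -, hfinite⟩ s hs i e he
  have hpath : G.IsTPath (L.take (i + 1)) :=
    (isTPath_of_foremostPathCost_ne_top hfinite).take i
  have hprefix : G.IsWalkFromToApp s e.2.1 e.2.2 (L.take (i + 1)) :=
    ⟨hpath.1, hs.take i, e, getLast?_take_succ he, rfl, rfl⟩
  rw [cStar_foremostPathCost hprefix hpath,
    foremostPathCost_of_isTPath_of_endsAtApp hpath hprefix.2.2]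

/-- The cost function that maps a temporal walk `W` to its arrival
time if `W` is a temporal path and to `∞` otherwise (whose optimal walks are exactly the
foremost temporal paths) is prefix-optimal. -/
theorem foremostPathCost_prefixOptimal {V : Type*} [Fintype V] (G : TemporalGraph V) :
    G.PrefixOptimal (G.foremostPathCost) :=
  foremostPathCost_prefixOptimal_general G

end TemporalGraph
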